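/- In a special abstract rank one group X with abelian unipotent subgroups A and B, for each nontrivial a in A, the element n(a) := a·b(a)⁻¹·a satisfies B^{n(a)} = A and A^{n(a)} = B. -/

import Mathlib

/-- Conjugate `S ^ g = g⁻¹ S g` of a subgroup. -/
def conjSub {X : Type*} [Group X] (S : Subgroup X) (g : X) : Subgroup X :=
  S.map ((MulAut.conj g⁻¹).toMonoidHom)

/-!
Conjugation `g ↦ S ^ g` is a right action and `A ^ a = A`. Writing `b = b(a)`,
`B ^ (a b⁻¹ a) = A ^ (b b⁻¹ a) = A ^ a = A`, and specialness gives `A ^ b⁻¹ = B ^ a⁻¹`, whence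
`A ^ (a b⁻¹ a) = A ^ (b⁻¹ a) = B ^ (a⁻¹ a) = B`.
-/

section ConjSub

open scoped Pointwise

variable {X : Type*} [Group X]

lemma conjSub_eq_smul (S : Subgroup X) (g : X) : conjSub S g = MulAut.conj g⁻¹ • S := rfl

lemma conjSub_one (S : Subgroup X) : conjSub S 1 = S := by
  simp [conjSub_eq_smul]

lemma conjSub_mul (S : Subgroup X) (g h : X) :
    conjSub S (g * h) = conjSub (conjSub S g) h := by
  simp only [conjSub_eq_smul, mul_inv_rev, map_mul, mul_smul]

lemma conjSub_conjSub_inv (S : Subgroup X) (g : X) : conjSub (conjSub S g) g⁻¹ = S := by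
  rw [← conjSub_mul, mul_inv_cancel, conjSub_one]

lemma conjSub_inv_conjSub (S : Subgroup X) (g : X) : conjSub (conjSub S g⁻¹) g = S := by
  simpa using conjSub_conjSub_inv S g⁻¹

lemma conjSub_of_mem {S : Subgroup X} {g : X} (hg : g ∈ S) : conjSub S g = S :=
  Subgroup.conj_smul_eq_self_of_mem (inv_mem hg)

end ConjSub

theorem stmt1_general
    {X : Type*} [Group X] (A B : Subgroup X)
    (bf : X → X)
    (hbf : ∀ a ∈ A, a ≠ 1 → bf a ∈ B ∧ bf a ≠ 1 ∧ conjSub A (bf a) = conjSub B a)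
    (hspecial : ∀ a ∈ A, a ≠ 1 → bf a⁻¹ = (bf a)⁻¹)
    (a : X) (ha : a ∈ A) (ha1 : a ≠ 1) :
    conjSub B (a * (bf a)⁻¹ * a) = A ∧ conjSub A (a * (bf a)⁻¹ * a) = B := by
  have hb : conjSub A (bf a) = conjSub B a := (hbf a ha ha1).2.2
  have hbinv : conjSub A (bf a)⁻¹ = conjSub B a⁻¹ :=
    hspecial a ha ha1 ▸ (hbf a⁻¹ (inv_mem ha) (inv_ne_one.mpr ha1)).2.2
  constructor
  · rw [conjSub_mul, conjSub_mul, ← hb, conjSub_conjSub_inv, conjSub_of_mem ha]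
  · rw [conjSub_mul, conjSub_mul, conjSub_of_mem ha, hbinv, conjSub_inv_conjSub]

theorem stmt1
    {X : Type*} [Group X] (A B : Subgroup X) (hAB : A ≠ B)
    (hAcomm : IsMulCommutative A) (hBcomm : IsMulCommutative B)
    (hgen : A ⊔ B = ⊤)
    (hab : ∀ a ∈ A, a ≠ 1 → ∃ b ∈ B, b ≠ 1 ∧ conjSub A b = conjSub B a)
    (hba : ∀ b ∈ B, b ≠ 1 → ∃ a ∈ A, a ≠ 1 ∧ conjSub B a = conjSub A b)
    (bf : X → X)
    (hbf : ∀ a ∈ A, a ≠ 1 → bf a ∈ B ∧ bf a ≠ 1 ∧ conjSub A (bf a) = conjSub B a)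
    (hbfu : ∀ a ∈ A, a ≠ 1 → ∀ b ∈ B, b ≠ 1 → conjSub A b = conjSub B a → b = bf a)
    (hspecial : ∀ a ∈ A, a ≠ 1 → bf a⁻¹ = (bf a)⁻¹)
    (a : X) (ha : a ∈ A) (ha1 : a ≠ 1) :
    conjSub B (a * (bf a)⁻¹ * a) = A ∧ conjSub A (a * (bf a)⁻¹ * a) = B :=
  stmt1_general A B bf hbf hspecial a ha ha1
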